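/- arXiv:2004.11653 — 4 statements merged into one kernel-verified Lean document; each statement's English description precedes it below -/
import Mathlib

section
/- Let R and S be reflexive digraphs such that #𝓗(G',R) ≤ #𝓗(G',S) for every digraph G'. Let G be a digraph, 𝓛 a set of subgraphs of G, and B := ⋃_{L ∈ 𝓛} A(L*). Then for every ξ ∈ 𝓜^𝓛(G,R): if the restriction of ι_ξ to B belongs to 𝓘^𝓛(G,S), then #𝓙^𝓛_{G,R}(ξ) ≤ #𝓙^𝓛_{G,S}(ξ). -/
/-- A finite digraph: a finite nonempty vertex set `V ⊆ ℕ` together with an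
arc set `A ⊆ V × V`. -/
structure Dgraph where
  V : Finset ℕ
  nonempty : V.Nonempty
  A : Finset (ℕ × ℕ)
  A_sub : ∀ p ∈ A, p.1 ∈ V ∧ p.2 ∈ V

namespace Dgraph

/-- The set of proper arcs of `G`, i.e. the arc set of `G*`. -/
def Astar (G : Dgraph) : Finset (ℕ × ℕ) := G.A.filter (fun p => p.1 ≠ p.2)

/-- `G` is reflexive. -/
def IsRefl (G : Dgraph) : Prop := ∀ v ∈ G.V, (v, v) ∈ G.A

/-- `p` is a path in `G` (a nonempty list of pairwise distinct vertices,
consecutive ones joined by arcs).  Its length as a path is `p.length - 1`. -/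
def IsPath (G : Dgraph) (p : List ℕ) : Prop :=
  p ≠ [] ∧ p.Nodup ∧ (∀ v ∈ p, v ∈ G.V) ∧ p.Chain' (fun v w => (v, w) ∈ G.A)

/-- `p` is a path in `G*`. -/
def IsPathStar (G : Dgraph) (p : List ℕ) : Prop :=
  p ≠ [] ∧ p.Nodup ∧ (∀ v ∈ p, v ∈ G.V) ∧ p.Chain' (fun v w => (v, w) ∈ G.A ∧ v ≠ w)

/-- `G*` contains a closed walk. -/
def HasClosedWalkStar (G : Dgraph) : Prop :=
  ∃ p : List ℕ, (∀ v ∈ p, v ∈ G.V) ∧ p.Chain' (fun v w => (v, w) ∈ G.A ∧ v ≠ w) ∧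
    2 ≤ p.length ∧ p.head? = p.getLast?

/-- membership in the class `𝔗ₐ`: `G*` is acyclic. -/
def MemTa (G : Dgraph) : Prop := ¬ G.HasClosedWalkStar

/-- The height of `G`: the maximal length of a path in `G`. -/
noncomputable def height (G : Dgraph) : ℕ :=
  sSup {n | ∃ p, G.IsPath p ∧ p.length = n + 1}

/-- The interval `[v,w]_G`. -/
def interval (G : Dgraph) (v w : ℕ) : Finset ℕ :=
  G.V.filter (fun z => (v, z) ∈ G.A ∧ (z, w) ∈ G.A)

/-- `ι(v,w)_G`, the cardinality of the interval `[v,w]_G`. -/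
def iota (G : Dgraph) (v w : ℕ) : ℕ := (G.interval v w).card

/-- The set `𝓗(G,H)` of homomorphisms from `G` to `H` (represented as total
maps `ℕ → ℕ`, normalized to `0` outside of `V(G)`). -/
def Hom (G H : Dgraph) : Set (ℕ → ℕ) :=
  {f | (∀ v ∈ G.V, f v ∈ H.V) ∧ (∀ p ∈ G.A, (f p.1, f p.2) ∈ H.A) ∧
    ∀ v, v ∉ G.V → f v = 0}

/-- The set `𝓢(G,H)` of strict homomorphisms from `G` to `H`. -/
def SHom (G H : Dgraph) : Set (ℕ → ℕ) :=
  {f ∈ Hom G H | ∀ p ∈ G.Astar, f p.1 ≠ f p.2}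

/-- `μ_ξ(G)`, for a homomorphism `ξ` from `G` into `H`. -/
def mu (G H : Dgraph) (f : ℕ → ℕ) : ℕ :=
  ∑ p ∈ G.Astar, H.iota (f p.1) (f p.2)

/-- `L` is a subgraph of `G`. -/
def Subgraph (L G : Dgraph) : Prop := L.V ⊆ G.V ∧ L.A ⊆ G.A

/-- Restriction of a map to a vertex set (normalized to `0` outside). -/
def restrict (X : Finset ℕ) (f : ℕ → ℕ) : ℕ → ℕ := fun x => if x ∈ X then f x else 0

/-- `𝓜(L,H)`: homomorphisms from `L` to `H` with maximal `μ`. -/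
def MSet (L H : Dgraph) : Set (ℕ → ℕ) :=
  {f ∈ Hom L H | ∀ g ∈ Hom L H, mu L H g ≤ mu L H f}

/-- `𝓜^𝓛(G,H)`. -/
def MLSet (G H : Dgraph) (𝓛 : Set Dgraph) : Set (ℕ → ℕ) :=
  {f ∈ Hom G H | ∀ L ∈ 𝓛, restrict L.V f ∈ MSet L H}

/-- `𝓙^𝓛_{G,H'}(ξ)` for `ξ ∈ 𝓗(G,H)`. -/
def JSet (G H H' : Dgraph) (𝓛 : Set Dgraph) (ξ : ℕ → ℕ) : Set (ℕ → ℕ) :=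
  {ζ ∈ Hom G H' | ∀ L ∈ 𝓛, ∀ p ∈ L.Astar,
    H'.iota (ζ p.1) (ζ p.2) = H.iota (ξ p.1) (ξ p.2)}

/-- The digraph `P_×` of a path `P = P_0, …, P_ℓ`: vertex set `{P_0,…,P_ℓ}`
and arcs `P_{i-1}P_i`. -/
def pathGraph (P : List ℕ) (h : P ≠ []) : Dgraph where
  V := P.toFinset
  nonempty := by
    obtain ⟨a, t, rfl⟩ := List.exists_cons_of_ne_nil h
    exact ⟨a, by simp⟩
  A := (P.zip P.tail).toFinset
  A_sub := by
    intro p hp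
    rw [List.mem_toFinset] at hp
    have h1 := List.of_mem_zip hp
    exact ⟨List.mem_toFinset.mpr h1.1, List.mem_toFinset.mpr (List.mem_of_mem_tail h1.2)⟩

/-- `𝓛(G)`: the set of the digraphs `P_×` for the paths `P` of length `h_G` in `G`. -/
def LSet (G : Dgraph) : Set Dgraph :=
  {D | ∃ (P : List ℕ) (h : P ≠ []), G.IsPath P ∧ P.length = G.height + 1 ∧
    D = pathGraph P h}

/-- The class `𝕽`: reflexive digraphs `R ∈ 𝔗ₐ` with
`𝓜^{𝓛(R)}(R,R) ∩ 𝓢(R,R) ≠ ∅`. -/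
def MemR (R : Dgraph) : Prop :=
  R.MemTa ∧ R.IsRefl ∧ (MLSet R R (LSet R) ∩ SHom R R).Nonempty

/-- `G` is a poset: reflexive, antisymmetric and transitive. -/
def IsPoset (G : Dgraph) : Prop :=
  G.IsRefl ∧ (∀ v w, (v, w) ∈ G.A → (w, v) ∈ G.A → v = w) ∧
    (∀ u v w, (u, v) ∈ G.A → (v, w) ∈ G.A → (u, w) ∈ G.A)

/-- The class `𝔗ₐ^{=n}`: digraphs in `𝔗ₐ` of height `n` in which every vertex
lies on a path of length `n`. -/
def MemTaEq (n : ℕ) (G : Dgraph) : Prop :=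
  G.MemTa ∧ G.height = n ∧ ∀ v ∈ G.V, ∃ p, G.IsPath p ∧ p.length = n + 1 ∧ v ∈ p

/-- A maximal path in `G`: no path in `G` properly contains its vertex set. -/
def MaximalPath (G : Dgraph) (P : List ℕ) : Prop :=
  G.IsPath P ∧ ∀ Q, G.IsPath Q → (∀ v ∈ P, v ∈ Q) → ∀ v ∈ Q, v ∈ P

end Dgraph

open Dgraph

/-!
Write `w := ι_ξ` and let `n p` count the distinct arc sets `A(L*)`, `L ∈ 𝓛`, containing `p`.
Adding `k · n p · w p` new vertices to the interval of every arc `p` of `G` gives a digraph `G_k`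
with `#𝓗(G_k, H) = ∑_{ζ ∈ 𝓗(G,H)} Ψ_H(ζ)^k`, where `Ψ_H(ζ) = ∏ₚ ι_ζ(p)^(n p · w p)`.
Every `ζ ∈ 𝓙(ξ)` has `Ψ(ζ) = M := ∏ₚ (w p)^(n p · w p)`. For `ζ ∈ 𝓗(G,S)` the maximality of a
homomorphism with profile `w` bounds `∑_{p ∈ A(L*)} ι_ζ(p)` by `∑_{p ∈ A(L*)} w p` for every
`L ∈ 𝓛`, and weighted AM-GM turns this into `Ψ_S(ζ) < M` unless `ζ ∈ 𝓙_S(ξ)`. Hence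
`#𝓙_R(ξ) · M^k ≤ #𝓗(G_k,R) ≤ #𝓗(G_k,S) ≤ #𝓙_S(ξ) · M^k + #𝓗(G,S) · (M-1)^k` for all `k`,
and `k → ∞` gives the claim.
-/

lemma cast_pow_self_lt_mul_exp {c w : ℕ} (h : c ≠ w) :
    (c : ℝ) ^ w < (w : ℝ) ^ w * Real.exp (c - w) := by
  rcases Nat.eq_zero_or_pos w with rfl | hw
  · simpa using Real.one_lt_exp_iff.mpr (show (0 : ℝ) < c by exact_mod_cast Nat.pos_of_ne_zero h)
  have hwR : (0 : ℝ) < w := by exact_mod_cast hw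
  have hx : (c : ℝ) / w - 1 ≠ 0 := by
    rw [sub_ne_zero, ne_eq, div_eq_one_iff_eq hwR.ne']
    exact_mod_cast h
  have hlt : (c : ℝ) / w < Real.exp ((c : ℝ) / w - 1) := by
    simpa using Real.add_one_lt_exp hx
  calc (c : ℝ) ^ w = (w : ℝ) ^ w * ((c : ℝ) / w) ^ w := by
        rw [← mul_pow, mul_div_cancel₀ _ hwR.ne']
    _ < (w : ℝ) ^ w * Real.exp ((c : ℝ) / w - 1) ^ w := by
        gcongr
    _ = (w : ℝ) ^ w * Real.exp (c - w) := by
        rw [← Real.exp_nat_mul, mul_sub, mul_div_cancel₀ _ hwR.ne', mul_one]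

lemma cast_pow_self_le_mul_exp (c w : ℕ) :
    (c : ℝ) ^ w ≤ (w : ℝ) ^ w * Real.exp (c - w) := by
  rcases eq_or_ne c w with rfl | h
  · simp
  · exact (cast_pow_self_lt_mul_exp h).le

theorem Finset.prod_pow_mul_lt_prod_pow_mul {ι : Type*} (s : Finset ι) (n c w : ι → ℕ)
    (hsum : ∑ i ∈ s, n i * c i ≤ ∑ i ∈ s, n i * w i) (hne : ∃ i ∈ s, n i ≠ 0 ∧ c i ≠ w i) :
    ∏ i ∈ s, c i ^ (n i * w i) < ∏ i ∈ s, w i ^ (n i * w i) := by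
  have hww : ∀ i, (0 : ℝ) < (w i : ℝ) ^ w i := fun i => by exact_mod_cast Nat.pow_self_pos
  let g : ι → ℝ := fun i => ((w i : ℝ) ^ w i * Real.exp (c i - w i)) ^ n i
  have hterm : ∀ i ∈ s, ((c i ^ (n i * w i) : ℕ) : ℝ) ≤ g i := fun i _ => by
    rw [Nat.cast_pow, pow_mul']
    exact pow_le_pow_left₀ (by positivity) (cast_pow_self_le_mul_exp _ _) _
  have hterm_lt : ∃ i ∈ s, ((c i ^ (n i * w i) : ℕ) : ℝ) < g i := by
    obtain ⟨i, hi, hn, hcw⟩ := hne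
    refine ⟨i, hi, ?_⟩
    rw [Nat.cast_pow, pow_mul']
    exact pow_lt_pow_left₀ (cast_pow_self_lt_mul_exp hcw) (by positivity) hn
  have hlt : ((∏ i ∈ s, c i ^ (n i * w i) : ℕ) : ℝ) < ∏ i ∈ s, g i := by
    rw [Nat.cast_prod]
    by_cases hzero : ∃ i ∈ s, c i ^ (n i * w i) = 0
    · rw [Finset.prod_eq_zero_iff.mpr (by exact_mod_cast hzero)]
      exact Finset.prod_pos fun i _ => pow_pos (mul_pos (hww i) (Real.exp_pos _)) _
    · push Not at hzero
      exact Finset.prod_lt_prod (fun i hi => by exact_mod_cast Nat.pos_of_ne_zero (hzero i hi))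
        hterm hterm_lt
  have hexp : Real.exp (∑ i ∈ s, n i * ((c i : ℝ) - w i)) ≤ 1 := by
    rw [Real.exp_le_one_iff]
    simp only [mul_sub, Finset.sum_sub_distrib, sub_nonpos]
    exact_mod_cast hsum
  have hle : ∏ i ∈ s, g i ≤ ((∏ i ∈ s, w i ^ (n i * w i) : ℕ) : ℝ) := by
    simp only [g, mul_pow, ← Real.exp_nat_mul, Finset.prod_mul_distrib, ← Real.exp_sum]
    push_cast
    simp only [pow_mul']
    exact mul_le_of_le_one_right (Finset.prod_nonneg fun i _ => by positivity) hexp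
  exact_mod_cast hlt.trans_le hle

lemma le_of_forall_mul_pow_le_mul_pow_add {A B C M N : ℕ} (hNM : N < M)
    (h : ∀ k, A * M ^ k ≤ B * M ^ k + C * N ^ k) : A ≤ B := by
  by_contra! hBA
  have hM : (0 : ℝ) < M := by exact_mod_cast (Nat.zero_le N).trans_lt hNM
  obtain ⟨k, hk⟩ := exists_pow_lt_of_lt_one (x := 1 / ((C : ℝ) + 1)) (by positivity)
    (show (N : ℝ) / M < 1 by rw [div_lt_one hM]; exact_mod_cast hNM)
  rw [div_pow, div_lt_div_iff₀ (by positivity) (by positivity), one_mul] at hk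
  have hCN : C * N ^ k + N ^ k < M ^ k := by
    rw [mul_comm, ← mul_add_one]
    exact_mod_cast hk
  have hAB : B * M ^ k + M ^ k ≤ A * M ^ k := by
    rw [← add_one_mul]
    exact Nat.mul_le_mul_right _ hBA
  have := h k
  omega

lemma Finset.card_filter_mul_pow_le_sum_pow {α : Type*} (s : Finset α) (P : α → Prop)
    [DecidablePred P] {F : α → ℕ} {M : ℕ} (hP : ∀ a ∈ s, P a → F a = M) (k : ℕ) :
    (s.filter P).card * M ^ k ≤ ∑ a ∈ s, F a ^ k := by
  rw [Finset.card_eq_sum_ones, Finset.sum_mul, one_mul, Finset.sum_filter]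
  refine Finset.sum_le_sum fun a ha => ?_
  split_ifs with h
  · rw [hP a ha h]
  · exact Nat.zero_le _

lemma Finset.sum_pow_le_card_filter_mul_pow_add {α : Type*} (s : Finset α) (P : α → Prop)
    [DecidablePred P] {F : α → ℕ} {M : ℕ} (hP : ∀ a ∈ s, P a → F a = M)
    (hnP : ∀ a ∈ s, ¬ P a → F a < M) (k : ℕ) :
    ∑ a ∈ s, F a ^ k ≤ (s.filter P).card * M ^ k + s.card * (M - 1) ^ k := by
  calc ∑ a ∈ s, F a ^ k ≤ ∑ a ∈ s, if P a then M ^ k else (M - 1) ^ k := by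
        refine Finset.sum_le_sum fun a ha => ?_
        split_ifs with h
        · rw [hP a ha h]
        · exact Nat.pow_le_pow_left (Nat.le_sub_one_of_lt (hnP a ha h)) k
    _ = (s.filter P).card * M ^ k + (s.filter fun a => ¬ P a).card * (M - 1) ^ k := by
        rw [Finset.sum_ite, Finset.sum_const, Finset.sum_const, smul_eq_mul, smul_eq_mul]
    _ ≤ (s.filter P).card * M ^ k + s.card * (M - 1) ^ k := by
        gcongr
        exact Finset.filter_subset _ _

def extensionsIn (Z : Finset ℕ) (c : ℕ → Finset ℕ) (d : ℕ → ℕ) : Set (ℕ → ℕ) :=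
  {g | (∀ z ∈ Z, g z ∈ c z) ∧ ∀ x ∉ Z, g x = d x}

lemma extensionsIn_eq_image (Z : Finset ℕ) (c : ℕ → Finset ℕ) (d : ℕ → ℕ) :
    extensionsIn Z c d =
      (fun (t : ∀ a ∈ Z, ℕ) x => if h : x ∈ Z then t x h else d x) '' ↑(Z.pi c) := by
  ext g
  constructor
  · rintro ⟨hZ, hout⟩
    refine ⟨fun x _ => g x, Finset.mem_pi.mpr hZ, funext fun x => ?_⟩
    by_cases hx : x ∈ Z <;> simp [hx, hout]
  · rintro ⟨t, ht, rfl⟩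
    exact ⟨fun z hz => by simpa [hz] using Finset.mem_pi.mp ht z hz, fun x hx => by simp [hx]⟩

lemma finite_extensionsIn (Z : Finset ℕ) (c : ℕ → Finset ℕ) (d : ℕ → ℕ) :
    (extensionsIn Z c d).Finite := by
  rw [extensionsIn_eq_image]
  exact (Z.pi c).finite_toSet.image _

lemma ncard_extensionsIn (Z : Finset ℕ) (c : ℕ → Finset ℕ) (d : ℕ → ℕ) :
    (extensionsIn Z c d).ncard = ∏ z ∈ Z, (c z).card := by
  rw [extensionsIn_eq_image, Set.InjOn.ncard_image, Set.ncard_coe_finset, Finset.card_pi]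
  intro t _ t' _ h
  funext x hx
  simpa [hx] using congrFun h x

namespace Dgraph

lemma finite_hom (G H : Dgraph) : (Hom G H).Finite :=
  (finite_extensionsIn G.V (fun _ => H.V) fun _ => 0).subset fun _ hg => ⟨hg.1, hg.2.2⟩

noncomputable def homFinset (G H : Dgraph) : Finset (ℕ → ℕ) := (finite_hom G H).toFinset

@[simp]
lemma mem_homFinset {G H : Dgraph} {g : ℕ → ℕ} : g ∈ homFinset G H ↔ g ∈ Hom G H :=
  Set.Finite.mem_toFinset _

lemma ncard_JSet (G H H' : Dgraph) (𝓛 : Set Dgraph) (ξ : ℕ → ℕ)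
    [DecidablePred (· ∈ JSet G H H' 𝓛 ξ)] :
    (JSet G H H' 𝓛 ξ).ncard = ((homFinset G H').filter (· ∈ JSet G H H' 𝓛 ξ)).card := by
  rw [← Set.ncard_coe_finset]
  congr 1
  ext ζ
  simpa using fun h => h.1

/-- `ι_ζ` in the notation of the paper. -/
def iotaOf (H : Dgraph) (ζ : ℕ → ℕ) (p : ℕ × ℕ) : ℕ := H.iota (ζ p.1) (ζ p.2)

lemma mem_interval {H : Dgraph} {v w z : ℕ} :
    z ∈ H.interval v w ↔ z ∈ H.V ∧ (v, z) ∈ H.A ∧ (z, w) ∈ H.A :=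
  Finset.mem_filter

lemma restrict_of_mem {X : Finset ℕ} {x : ℕ} (f : ℕ → ℕ) (hx : x ∈ X) : restrict X f x = f x :=
  if_pos hx

lemma restrict_mem_hom {L G H : Dgraph} (hLG : Subgraph L G) {g : ℕ → ℕ} (hg : g ∈ Hom G H) :
    restrict L.V g ∈ Hom L H := by
  refine ⟨fun v hv => ?_, fun p hp => ?_, fun v hv => if_neg hv⟩
  · rw [restrict_of_mem g hv]
    exact hg.1 v (hLG.1 hv)
  · rw [restrict_of_mem g (L.A_sub p hp).1, restrict_of_mem g (L.A_sub p hp).2]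
    exact hg.2.1 p (hLG.2 hp)

lemma mu_restrict (L H : Dgraph) (g : ℕ → ℕ) :
    mu L H (restrict L.V g) = ∑ p ∈ L.Astar, iotaOf H g p := by
  refine Finset.sum_congr rfl fun p hp => ?_
  have hpA := (L.A_sub p (Finset.mem_filter.mp hp).1)
  rw [restrict_of_mem g hpA.1, restrict_of_mem g hpA.2]
  rfl

lemma sum_iotaOf_le_of_mem_MLSet {G H L : Dgraph} {𝓛 : Set Dgraph} (hL : L ∈ 𝓛)
    (hLG : Subgraph L G) {ζ ζ' : ℕ → ℕ} (hζ : ζ ∈ Hom G H) (hζ' : ζ' ∈ MLSet G H 𝓛) :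
    ∑ p ∈ L.Astar, iotaOf H ζ p ≤ ∑ p ∈ L.Astar, iotaOf H ζ' p := by
  rw [← mu_restrict, ← mu_restrict]
  exact (hζ'.2 L hL).2 _ (restrict_mem_hom hLG hζ)

def fresh (G : Dgraph) (p : ℕ × ℕ) (i : ℕ) : ℕ := G.V.sup id + 1 + Nat.pair (Nat.pair p.1 p.2) i

def freshArc (G : Dgraph) (z : ℕ) : ℕ × ℕ := Nat.unpair (Nat.unpair (z - (G.V.sup id + 1))).1

@[simp]
lemma freshArc_fresh (G : Dgraph) (p : ℕ × ℕ) (i : ℕ) : freshArc G (fresh G p i) = p := by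
  simp [freshArc, fresh]

lemma fresh_injective {G : Dgraph} {p q : ℕ × ℕ} {i j : ℕ} (h : fresh G p i = fresh G q j) :
    p = q ∧ i = j := by
  have h' := Nat.add_left_cancel h
  rw [Nat.pair_eq_pair, Nat.pair_eq_pair] at h'
  exact ⟨Prod.ext h'.1.1 h'.1.2, h'.2⟩

lemma fresh_notMem (G : Dgraph) (p : ℕ × ℕ) (i : ℕ) : fresh G p i ∉ G.V := fun h => by
  have := Finset.le_sup (f := id) h
  simp only [id, fresh] at this
  omega

def freshVerts (G : Dgraph) (f : ℕ × ℕ → ℕ) : Finset ℕ :=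
  G.A.biUnion fun p => (Finset.range (f p)).image (fresh G p)

lemma mem_freshVerts {G : Dgraph} {f : ℕ × ℕ → ℕ} {z : ℕ} :
    z ∈ freshVerts G f ↔ ∃ p ∈ G.A, ∃ i < f p, fresh G p i = z := by
  simp [freshVerts]

lemma notMem_freshVerts {G : Dgraph} {f : ℕ × ℕ → ℕ} {v : ℕ} (hv : v ∈ G.V) :
    v ∉ freshVerts G f := by
  rw [mem_freshVerts]
  rintro ⟨p, -, i, -, rfl⟩
  exact fresh_notMem G p i hv

lemma freshArc_mem {G : Dgraph} {f : ℕ × ℕ → ℕ} {z : ℕ} (hz : z ∈ freshVerts G f) :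
    freshArc G z ∈ G.A := by
  obtain ⟨p, hp, i, -, rfl⟩ := mem_freshVerts.mp hz
  rwa [freshArc_fresh]

lemma prod_freshVerts (G : Dgraph) (f F : ℕ × ℕ → ℕ) :
    ∏ z ∈ freshVerts G f, F (freshArc G z) = ∏ p ∈ G.A, F p ^ f p := by
  rw [freshVerts, Finset.prod_biUnion]
  · refine Finset.prod_congr rfl fun p _ => ?_
    rw [Finset.prod_image fun i _ j _ h => (fresh_injective h).2]
    simp
  · intro p _ q _ hpq
    simp only [Function.onFun, Finset.disjoint_left, Finset.mem_image]
    rintro _ ⟨i, -, rfl⟩ ⟨j, -, h⟩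
    exact hpq (fresh_injective h).1.symm

/-- `G` with `f p` new vertices added to the interval of every arc `p`. -/
def gadget (G : Dgraph) (f : ℕ × ℕ → ℕ) : Dgraph where
  V := G.V ∪ freshVerts G f
  nonempty := G.nonempty.mono Finset.subset_union_left
  A := G.A ∪ (freshVerts G f).biUnion fun z => {((freshArc G z).1, z), (z, (freshArc G z).2)}
  A_sub q hq := by
    rcases Finset.mem_union.mp hq with hq | hq
    · exact ⟨Finset.mem_union_left _ (G.A_sub q hq).1, Finset.mem_union_left _ (G.A_sub q hq).2⟩
    · simp only [Finset.mem_biUnion, Finset.mem_insert, Finset.mem_singleton] at hq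
      obtain ⟨z, hz, rfl | rfl⟩ := hq
      · exact ⟨Finset.mem_union_left _ (G.A_sub _ (freshArc_mem hz)).1,
          Finset.mem_union_right _ hz⟩
      · exact ⟨Finset.mem_union_right _ hz,
          Finset.mem_union_left _ (G.A_sub _ (freshArc_mem hz)).2⟩

lemma mem_gadget_A {G : Dgraph} {f : ℕ × ℕ → ℕ} {q : ℕ × ℕ} :
    q ∈ (gadget G f).A ↔
      q ∈ G.A ∨ ∃ z ∈ freshVerts G f, q = ((freshArc G z).1, z) ∨ q = (z, (freshArc G z).2) := by
  simp [gadget]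

lemma subgraph_gadget (G : Dgraph) (f : ℕ × ℕ → ℕ) : Subgraph G (gadget G f) :=
  ⟨Finset.subset_union_left, Finset.subset_union_left⟩

def gadgetExtensions (G H : Dgraph) (f : ℕ × ℕ → ℕ) (ζ : ℕ → ℕ) : Set (ℕ → ℕ) :=
  extensionsIn (freshVerts G f) (fun z => H.interval (ζ (freshArc G z).1) (ζ (freshArc G z).2)) ζ

lemma restrict_eq_iff_mem_gadgetExtensions {G H : Dgraph} {f : ℕ × ℕ → ℕ} {ζ g : ℕ → ℕ}
    (hζ : ζ ∈ Hom G H) (hg : g ∈ Hom (gadget G f) H) :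
    restrict G.V g = ζ ↔ g ∈ gadgetExtensions G H f ζ := by
  constructor
  · rintro rfl
    refine ⟨fun z hz => ?_, fun x hx => ?_⟩
    · have hab := G.A_sub _ (freshArc_mem hz)
      show g z ∈ H.interval _ _
      rw [restrict_of_mem g hab.1, restrict_of_mem g hab.2]
      exact mem_interval.mpr ⟨hg.1 z (Finset.mem_union_right _ hz),
        hg.2.1 _ (mem_gadget_A.mpr (Or.inr ⟨z, hz, Or.inl rfl⟩)),
        hg.2.1 _ (mem_gadget_A.mpr (Or.inr ⟨z, hz, Or.inr rfl⟩))⟩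
    · by_cases hxG : x ∈ G.V
      · rw [restrict_of_mem g hxG]
      · rw [restrict, if_neg hxG]
        exact hg.2.2 x (by simp [gadget, hxG, hx])
  · intro hext
    funext x
    by_cases hxG : x ∈ G.V
    · rw [restrict_of_mem g hxG]
      exact hext.2 x (notMem_freshVerts hxG)
    · rw [restrict, if_neg hxG, hζ.2.2 x hxG]

lemma hom_gadget_of_mem_gadgetExtensions {G H : Dgraph} {f : ℕ × ℕ → ℕ} {ζ g : ℕ → ℕ}
    (hζ : ζ ∈ Hom G H) (hg : g ∈ gadgetExtensions G H f ζ) : g ∈ Hom (gadget G f) H := by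
  have hgζ : ∀ v ∈ G.V, g v = ζ v := fun v hv => hg.2 v (notMem_freshVerts hv)
  refine ⟨fun v hv => ?_, fun q hq => ?_, fun v hv => ?_⟩
  · rcases Finset.mem_union.mp hv with hv | hv
    · rw [hgζ v hv]
      exact hζ.1 v hv
    · exact (mem_interval.mp (hg.1 v hv)).1
  · rcases mem_gadget_A.mp hq with hq | ⟨z, hz, rfl | rfl⟩
    · rw [hgζ _ (G.A_sub q hq).1, hgζ _ (G.A_sub q hq).2]
      exact hζ.2.1 q hq
    · rw [hgζ _ (G.A_sub _ (freshArc_mem hz)).1]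
      exact (mem_interval.mp (hg.1 z hz)).2.1
    · rw [hgζ _ (G.A_sub _ (freshArc_mem hz)).2]
      exact (mem_interval.mp (hg.1 z hz)).2.2
  · simp only [gadget, Finset.mem_union, not_or] at hv
    rw [hg.2 v hv.2]
    exact hζ.2.2 v hv.1

/-- Each homomorphism `ζ : G → H` extends to `gadget G f` in `∏ₚ ι_ζ(p) ^ f p` ways. -/
lemma ncard_hom_gadget (G H : Dgraph) (f : ℕ × ℕ → ℕ) :
    (Hom (gadget G f) H).ncard = ∑ ζ ∈ homFinset G H, ∏ p ∈ G.A, iotaOf H ζ p ^ f p := by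
  classical
  rw [Set.ncard_eq_toFinset_card _ (finite_hom _ _),
    Finset.card_eq_sum_card_fiberwise (f := restrict G.V) (t := homFinset G H)
      fun g hg => mem_homFinset.mpr (restrict_mem_hom (subgraph_gadget G f)
        ((Set.Finite.mem_toFinset _).mp hg))]
  refine Finset.sum_congr rfl fun ζ hζ => ?_
  rw [mem_homFinset] at hζ
  have hfiber : ↑((finite_hom (gadget G f) H).toFinset.filter fun g => restrict G.V g = ζ) =
      gadgetExtensions G H f ζ := by
    ext g
    simp only [Finset.coe_filter, Set.Finite.mem_toFinset, Set.mem_ofPred_eq]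
    exact ⟨fun ⟨hg, hres⟩ => (restrict_eq_iff_mem_gadgetExtensions hζ hg).mp hres,
      fun hext => have hg := hom_gadget_of_mem_gadgetExtensions hζ hext
        ⟨hg, (restrict_eq_iff_mem_gadgetExtensions hζ hg).mpr hext⟩⟩
  rw [← Set.ncard_coe_finset, hfiber, gadgetExtensions, ncard_extensionsIn]
  exact prod_freshVerts G f (iotaOf H ζ)

open Classical in
/-- The distinct arc sets `A(L*)`, `L ∈ 𝓛`, as a finite family (`𝓛` itself may be infinite). -/
noncomputable def arcSets (G : Dgraph) (𝓛 : Set Dgraph) : Finset (Finset (ℕ × ℕ)) :=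
  G.A.powerset.filter fun T => ∃ L ∈ 𝓛, L.Astar = T

noncomputable def arcMult (G : Dgraph) (𝓛 : Set Dgraph) (p : ℕ × ℕ) : ℕ :=
  ((arcSets G 𝓛).filter (p ∈ ·)).card

noncomputable def profileWeight (G : Dgraph) (𝓛 : Set Dgraph) (ι w : ℕ × ℕ → ℕ) : ℕ :=
  ∏ p ∈ G.A, ι p ^ (arcMult G 𝓛 p * w p)

lemma mem_arcSets {G : Dgraph} {𝓛 : Set Dgraph} {T : Finset (ℕ × ℕ)} :
    T ∈ arcSets G 𝓛 ↔ T ⊆ G.A ∧ ∃ L ∈ 𝓛, L.Astar = T := by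
  classical
  simp [arcSets]

lemma Astar_mem_arcSets {G L : Dgraph} {𝓛 : Set Dgraph} (hL : L ∈ 𝓛) (hLG : Subgraph L G) :
    L.Astar ∈ arcSets G 𝓛 :=
  mem_arcSets.mpr ⟨(Finset.filter_subset _ _).trans hLG.2, L, hL, rfl⟩

lemma sum_arcMult_mul (G : Dgraph) (𝓛 : Set Dgraph) (x : ℕ × ℕ → ℕ) :
    ∑ p ∈ G.A, arcMult G 𝓛 p * x p = ∑ T ∈ arcSets G 𝓛, ∑ p ∈ T, x p := by
  simp only [arcMult, Finset.card_filter, Finset.sum_mul, ite_mul, one_mul, zero_mul]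
  rw [Finset.sum_comm]
  refine Finset.sum_congr rfl fun T hT => ?_
  rw [← Finset.sum_filter, Finset.filter_mem_eq_inter, Finset.inter_eq_right.mpr
    (mem_arcSets.mp hT).1]

lemma profileWeight_eq_of_eqOn {G : Dgraph} {𝓛 : Set Dgraph} {ι w : ℕ × ℕ → ℕ}
    (h : ∀ L ∈ 𝓛, ∀ p ∈ L.Astar, ι p = w p) :
    profileWeight G 𝓛 ι w = profileWeight G 𝓛 w w := by
  refine Finset.prod_congr rfl fun p _ => ?_
  rcases Nat.eq_zero_or_pos (arcMult G 𝓛 p) with h0 | hpos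
  · simp [h0]
  obtain ⟨T, hT⟩ := Finset.card_pos.mp hpos
  obtain ⟨hT, hpT⟩ := Finset.mem_filter.mp hT
  obtain ⟨-, L, hL, rfl⟩ := mem_arcSets.mp hT
  rw [h L hL p hpT]

lemma profileWeight_self_pos (G : Dgraph) (𝓛 : Set Dgraph) (w : ℕ × ℕ → ℕ) :
    0 < profileWeight G 𝓛 w w :=
  Finset.prod_pos fun p _ => by rw [pow_mul']; exact pow_pos Nat.pow_self_pos _

/-- The weighted AM-GM inequality, with the `𝓛`-constraints summed with multiplicities `arcMult`. -/
lemma profileWeight_lt {G : Dgraph} {𝓛 : Set Dgraph} (h𝓛 : ∀ L ∈ 𝓛, Subgraph L G)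
    {ι w : ℕ × ℕ → ℕ} (hsum : ∀ L ∈ 𝓛, ∑ p ∈ L.Astar, ι p ≤ ∑ p ∈ L.Astar, w p)
    (hne : ∃ L ∈ 𝓛, ∃ p ∈ L.Astar, ι p ≠ w p) :
    profileWeight G 𝓛 ι w < profileWeight G 𝓛 w w := by
  refine Finset.prod_pow_mul_lt_prod_pow_mul _ _ _ _ ?_ ?_
  · rw [sum_arcMult_mul, sum_arcMult_mul]
    refine Finset.sum_le_sum fun T hT => ?_
    obtain ⟨-, L, hL, rfl⟩ := mem_arcSets.mp hT
    exact hsum L hL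
  · obtain ⟨L, hL, p, hp, hιw⟩ := hne
    have hT := Astar_mem_arcSets hL (h𝓛 L hL)
    refine ⟨p, (mem_arcSets.mp hT).1 hp, ?_, hιw⟩
    exact Finset.card_ne_zero.mpr ⟨_, Finset.mem_filter.mpr ⟨hT, hp⟩⟩

lemma ncard_hom_gadget_arcMult (G H : Dgraph) (𝓛 : Set Dgraph) (w : ℕ × ℕ → ℕ) (k : ℕ) :
    (Hom (gadget G fun p => arcMult G 𝓛 p * w p * k) H).ncard =
      ∑ ζ ∈ homFinset G H, profileWeight G 𝓛 (iotaOf H ζ) w ^ k := by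
  simp only [ncard_hom_gadget, profileWeight, pow_mul, Finset.prod_pow]

end Dgraph

theorem stmt_5_general (R S : Dgraph)
    (hHom : ∀ G' : Dgraph, (Hom G' R).ncard ≤ (Hom G' S).ncard)
    (G : Dgraph) (𝓛 : Set Dgraph) (h𝓛 : ∀ L ∈ 𝓛, Subgraph L G)
    (ξ : ℕ → ℕ)
    (hI : ∃ ζ ∈ MLSet G S 𝓛, ∀ L ∈ 𝓛, ∀ p ∈ L.Astar,
      S.iota (ζ p.1) (ζ p.2) = R.iota (ξ p.1) (ξ p.2)) :
    (JSet G R R 𝓛 ξ).ncard ≤ (JSet G R S 𝓛 ξ).ncard := by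
  classical
  obtain ⟨ζS, hζS, hζSξ⟩ := hI
  set w := iotaOf R ξ
  set M := profileWeight G 𝓛 w w
  have hJ : ∀ (H : Dgraph) ζ, ζ ∈ JSet G R H 𝓛 ξ → profileWeight G 𝓛 (iotaOf H ζ) w = M :=
    fun H ζ hζ => profileWeight_eq_of_eqOn hζ.2
  have hS : ∀ ζ ∈ homFinset G S, ζ ∉ JSet G R S 𝓛 ξ → profileWeight G 𝓛 (iotaOf S ζ) w < M := by
    intro ζ hζ hζJ
    refine profileWeight_lt h𝓛 (fun L hL => ?_) ?_
    · calc ∑ p ∈ L.Astar, iotaOf S ζ p ≤ ∑ p ∈ L.Astar, iotaOf S ζS p :=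
            sum_iotaOf_le_of_mem_MLSet hL (h𝓛 L hL) (mem_homFinset.mp hζ) hζS
        _ = ∑ p ∈ L.Astar, w p := Finset.sum_congr rfl (hζSξ L hL)
    · by_contra! hall
      exact hζJ ⟨mem_homFinset.mp hζ, hall⟩
  rw [ncard_JSet, ncard_JSet]
  refine le_of_forall_mul_pow_le_mul_pow_add (C := (homFinset G S).card)
    (Nat.sub_one_lt (profileWeight_self_pos G 𝓛 w).ne') fun k => ?_
  calc _ ≤ ∑ ζ ∈ homFinset G R, profileWeight G 𝓛 (iotaOf R ζ) w ^ k :=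
        Finset.card_filter_mul_pow_le_sum_pow _ _ (fun ζ _ => hJ R ζ) k
    _ = (Hom (gadget G fun p => arcMult G 𝓛 p * w p * k) R).ncard :=
        (ncard_hom_gadget_arcMult G R 𝓛 w k).symm
    _ ≤ (Hom (gadget G fun p => arcMult G 𝓛 p * w p * k) S).ncard := hHom _
    _ = ∑ ζ ∈ homFinset G S, profileWeight G 𝓛 (iotaOf S ζ) w ^ k :=
        ncard_hom_gadget_arcMult G S 𝓛 w k
    _ ≤ _ := Finset.sum_pow_le_card_filter_mul_pow_add _ _ (fun ζ _ => hJ S ζ) hS k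

theorem stmt_5 (R S : Dgraph) (hRr : R.IsRefl) (hSr : S.IsRefl)
    (hHom : ∀ G' : Dgraph, (Hom G' R).ncard ≤ (Hom G' S).ncard)
    (G : Dgraph) (𝓛 : Set Dgraph) (h𝓛 : ∀ L ∈ 𝓛, Subgraph L G)
    (ξ : ℕ → ℕ) (hξ : ξ ∈ MLSet G R 𝓛)
    (hI : ∃ ζ ∈ MLSet G S 𝓛, ∀ L ∈ 𝓛, ∀ p ∈ L.Astar,
      S.iota (ζ p.1) (ζ p.2) = R.iota (ξ p.1) (ξ p.2)) :
    (JSet G R R 𝓛 ξ).ncard ≤ (JSet G R S 𝓛 ξ).ncard :=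
  stmt_5_general R S hHom G 𝓛 h𝓛 ξ hI
end

section
/- Let G be a digraph, H a reflexive digraph, 𝓛 a set of subgraphs of G, and ζ ∈ 𝓜^𝓛(G,H). Define γ(v,w) := ι_ζ(v,w) · #{L ∈ 𝓛 : vw ∈ A(L*)} for all vw ∈ A(G*). Then γ is a ζ-selecting arc weight of G within 𝓗(G,H). -/
open Dgraph

/-- `π_α(ξ)` for an arc weight `α` of `G` and a homomorphism `ξ` into `H`. -/
def piw (G H : Dgraph) (α : ℕ × ℕ → ℕ) (f : ℕ → ℕ) : ℕ :=
  ∏ p ∈ G.Astar, (H.iota (f p.1) (f p.2)) ^ (α p)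

/-- `α` is a `ζ`-selecting arc weight of `G` within `𝓗(G,H)`. -/
def Selecting (G H : Dgraph) (α : ℕ × ℕ → ℕ) (ζ : ℕ → ℕ) : Prop :=
  ∀ ξ ∈ Hom G H, piw G H α ξ ≤ piw G H α ζ ∧
    (piw G H α ξ = piw G H α ζ ↔
      ∀ p ∈ G.Astar, 0 < α p → H.iota (ξ p.1) (ξ p.2) = H.iota (ζ p.1) (ζ p.2))

private lemma pow_le_exp_aux (a b : ℕ) (hb : 1 ≤ b) :
    (a : ℝ) ^ b ≤ (b : ℝ) ^ b * Real.exp ((a : ℝ) - b) := by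
  have hb0 : (0:ℝ) < b := by exact_mod_cast hb
  have h1 : (a:ℝ)/b ≤ Real.exp ((a:ℝ)/b - 1) := by
    have := Real.add_one_le_exp ((a:ℝ)/b - 1); linarith
  have h2 : (a:ℝ) ≤ (b:ℝ) * Real.exp ((a:ℝ)/b - 1) := by
    rw [div_le_iff₀ hb0] at h1; linarith
  have h3 : (a:ℝ)^b ≤ ((b:ℝ) * Real.exp ((a:ℝ)/b - 1))^b :=
    pow_le_pow_left₀ (Nat.cast_nonneg a) h2 b
  refine h3.trans_eq ?_
  rw [mul_pow, ← Real.exp_nat_mul]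
  congr 2
  field_simp

private lemma pow_lt_exp_aux (a b : ℕ) (hb : 1 ≤ b) (hab : a ≠ b) :
    (a : ℝ) ^ b < (b : ℝ) ^ b * Real.exp ((a : ℝ) - b) := by
  have hb0 : (0:ℝ) < b := by exact_mod_cast hb
  have hne : (a:ℝ)/b - 1 ≠ 0 := by
    intro h
    rw [sub_eq_zero, div_eq_one_iff_eq hb0.ne'] at h
    exact hab (by exact_mod_cast h)
  have h1 : (a:ℝ)/b < Real.exp ((a:ℝ)/b - 1) := by
    have := Real.add_one_lt_exp hne; linarith
  have h2 : (a:ℝ) < (b:ℝ) * Real.exp ((a:ℝ)/b - 1) := by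
    rw [div_lt_iff₀ hb0] at h1; linarith
  have h3 : (a:ℝ)^b < ((b:ℝ) * Real.exp ((a:ℝ)/b - 1))^b :=
    pow_lt_pow_left₀ h2 (Nat.cast_nonneg a) (by omega)
  refine h3.trans_eq ?_
  rw [mul_pow, ← Real.exp_nat_mul]
  congr 2
  field_simp

private lemma pow_le_exp_mul (a b m : ℕ) (hb : 1 ≤ b) :
    (a : ℝ) ^ (b * m) ≤ (b : ℝ) ^ (b * m) * Real.exp (((a : ℝ) - b) * m) := by
  rw [pow_mul, pow_mul, show ((a:ℝ)-b)*m = m * ((a:ℝ)-b) by ring, Real.exp_nat_mul,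
    ← mul_pow]
  exact pow_le_pow_left₀ (by positivity) (pow_le_exp_aux a b hb) m

private lemma pow_lt_exp_mul (a b m : ℕ) (hb : 1 ≤ b) (hm : m ≠ 0) (hab : a ≠ b) :
    (a : ℝ) ^ (b * m) < (b : ℝ) ^ (b * m) * Real.exp (((a : ℝ) - b) * m) := by
  rw [pow_mul, pow_mul, show ((a:ℝ)-b)*m = m * ((a:ℝ)-b) by ring, Real.exp_nat_mul,
    ← mul_pow]
  exact pow_lt_pow_left₀ (pow_lt_exp_aux a b hb hab) (by positivity) hm

private lemma Dgraph.ext_aux (L M : Dgraph) (h1 : L.V = M.V) (h2 : L.A = M.A) :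
    L = M := by
  cases L; cases M; simp_all

theorem stmt_7 (G H : Dgraph) (hHr : H.IsRefl) (𝓛 : Set Dgraph)
    (h𝓛 : ∀ L ∈ 𝓛, Subgraph L G) (ζ : ℕ → ℕ) (hζ : ζ ∈ MLSet G H 𝓛) :
    Selecting G H
      (fun p => H.iota (ζ p.1) (ζ p.2) * {L | L ∈ 𝓛 ∧ p ∈ L.Astar}.ncard) ζ := by
  classical
  -- 𝓛 is finite
  have hfin : 𝓛.Finite := by
    have hsubset : 𝓛 ⊆ (fun L : Dgraph => (L.V, L.A)) ⁻¹'
        ((G.V.powerset ×ˢ G.A.powerset : Finset (Finset ℕ × Finset (ℕ × ℕ))) :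
          Set (Finset ℕ × Finset (ℕ × ℕ))) := by
      intro L hL
      simp only [Set.mem_preimage, Finset.coe_mem, Finset.mem_coe,
        Finset.mem_product, Finset.mem_powerset]
      exact ⟨(h𝓛 L hL).1, (h𝓛 L hL).2⟩
    refine Set.Finite.subset (Set.Finite.preimage ?_ (Finset.finite_toSet _)) hsubset
    intro L1 _ L2 _ h
    simp only [Prod.mk.injEq] at h
    exact Dgraph.ext_aux L1 L2 h.1 h.2
  set T : Finset Dgraph := hfin.toFinset with hT
  have hTmem : ∀ L, L ∈ T ↔ L ∈ 𝓛 := fun L => hfin.mem_toFinset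
  have hncard : ∀ p : ℕ × ℕ, {L | L ∈ 𝓛 ∧ p ∈ L.Astar}.ncard =
      (T.filter (fun L => p ∈ L.Astar)).card := by
    intro p
    rw [← Set.ncard_coe_finset]
    congr 1
    ext L
    simp [hTmem L]
  -- iota ≥ 1 for homomorphisms
  have hiota1 : ∀ f ∈ Hom G H, ∀ p ∈ G.Astar, 1 ≤ H.iota (f p.1) (f p.2) := by
    rintro f ⟨hfV, hfA, -⟩ p hp
    have hpA : p ∈ G.A := (Finset.mem_filter.mp hp).1
    have h1 : f p.1 ∈ H.V := hfV _ (G.A_sub p hpA).1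
    have h2 : (f p.1, f p.2) ∈ H.A := hfA p hpA
    have hmem : f p.1 ∈ H.interval (f p.1) (f p.2) :=
      Finset.mem_filter.mpr ⟨h1, hHr _ h1, h2⟩
    exact Finset.card_pos.mpr ⟨_, hmem⟩
  have hsub : ∀ L ∈ 𝓛, L.Astar ⊆ G.Astar := by
    intro L hL p hp
    rw [Dgraph.Astar, Finset.mem_filter] at hp ⊢
    exact ⟨(h𝓛 L hL).2 hp.1, hp.2⟩
  have hres : ∀ L ∈ 𝓛, ∀ f ∈ Hom G H, restrict L.V f ∈ Hom L H := by
    rintro L hL f ⟨hfV, hfA, -⟩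
    refine ⟨?_, ?_, ?_⟩
    · intro v hv
      simp only [restrict, if_pos hv]
      exact hfV v ((h𝓛 L hL).1 hv)
    · intro p hp
      have h12 := L.A_sub p hp
      simp only [restrict, if_pos h12.1, if_pos h12.2]
      exact hfA p ((h𝓛 L hL).2 hp)
    · intro v hv
      simp [restrict, hv]
  have hmures : ∀ L ∈ 𝓛, ∀ f : ℕ → ℕ,
      mu L H (restrict L.V f) = ∑ p ∈ L.Astar, H.iota (f p.1) (f p.2) := by
    intro L hL f
    refine Finset.sum_congr rfl fun p hp => ?_
    have hpA : p ∈ L.A := (Finset.mem_filter.mp hp).1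
    have h12 := L.A_sub p hpA
    simp [restrict, if_pos h12.1, if_pos h12.2]
  intro ξ hξ
  set x : ℕ × ℕ → ℕ := fun p => H.iota (ξ p.1) (ξ p.2) with hx
  set z : ℕ × ℕ → ℕ := fun p => H.iota (ζ p.1) (ζ p.2) with hz
  set np : ℕ × ℕ → ℕ := fun p => (T.filter (fun L => p ∈ L.Astar)).card with hnp
  have hx1 : ∀ p ∈ G.Astar, 1 ≤ x p := hiota1 ξ hξ
  have hz1 : ∀ p ∈ G.Astar, 1 ≤ z p := hiota1 ζ hζ.1
  -- per-L sum inequality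
  have hmuL : ∀ L ∈ 𝓛, ∑ p ∈ L.Astar, x p ≤ ∑ p ∈ L.Astar, z p := by
    intro L hL
    have hM := hζ.2 L hL
    have h := hM.2 (restrict L.V ξ) (hres L hL ξ hξ)
    rwa [hmures L hL ξ, hmures L hL ζ] at h
  -- double counting
  have hkey : ∀ y : ℕ × ℕ → ℕ,
      ∑ p ∈ G.Astar, np p * y p = ∑ L ∈ T, ∑ p ∈ L.Astar, y p := by
    intro y
    have h1 : ∀ p ∈ G.Astar, np p * y p =
        ∑ L ∈ T, if p ∈ L.Astar then y p else 0 := by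
      intro p _
      rw [← Finset.sum_filter, Finset.sum_const, smul_eq_mul]
    rw [Finset.sum_congr rfl h1, Finset.sum_comm]
    refine Finset.sum_congr rfl fun L hL => ?_
    rw [← Finset.sum_filter]
    congr 1
    ext p
    simp only [Finset.mem_filter]
    exact ⟨fun h => h.2, fun h => ⟨hsub L ((hTmem L).mp hL) h, h⟩⟩
  have hsum : ∑ p ∈ G.Astar, np p * x p ≤ ∑ p ∈ G.Astar, np p * z p := by
    rw [hkey x, hkey z]
    exact Finset.sum_le_sum fun L hL => hmuL L ((hTmem L).mp hL)
  -- real versions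
  have hexp1 : Real.exp (∑ p ∈ G.Astar, ((x p : ℝ) - z p) * np p) ≤ 1 := by
    rw [Real.exp_le_one_iff]
    have h' : ((∑ p ∈ G.Astar, np p * x p : ℕ) : ℝ) ≤
        ((∑ p ∈ G.Astar, np p * z p : ℕ) : ℝ) := Nat.cast_le.mpr hsum
    push_cast at h'
    have heq : ∑ p ∈ G.Astar, ((x p : ℝ) - z p) * np p =
        (∑ p ∈ G.Astar, (np p : ℝ) * x p) - ∑ p ∈ G.Astar, (np p : ℝ) * z p := by
      rw [← Finset.sum_sub_distrib]
      exact Finset.sum_congr rfl fun p _ => by ring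
    rw [heq]
    linarith
  have hfacle : ∀ p ∈ G.Astar, ((x p : ℝ)) ^ (z p * np p) ≤
      ((z p : ℝ)) ^ (z p * np p) * Real.exp (((x p : ℝ) - z p) * np p) :=
    fun p hp => pow_le_exp_mul (x p) (z p) (np p) (hz1 p hp)
  have hprodeq : (∏ p ∈ G.Astar, (((z p : ℝ)) ^ (z p * np p) *
      Real.exp (((x p : ℝ) - z p) * np p))) =
      (∏ p ∈ G.Astar, ((z p : ℝ)) ^ (z p * np p)) *
        Real.exp (∑ p ∈ G.Astar, ((x p : ℝ) - z p) * np p) := by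
    rw [Finset.prod_mul_distrib, Real.exp_sum]
  have hub : (∏ p ∈ G.Astar, (((z p : ℝ)) ^ (z p * np p) *
      Real.exp (((x p : ℝ) - z p) * np p))) ≤
      ∏ p ∈ G.Astar, ((z p : ℝ)) ^ (z p * np p) := by
    rw [hprodeq]
    have hnn : (0:ℝ) ≤ ∏ p ∈ G.Astar, ((z p : ℝ)) ^ (z p * np p) := by positivity
    calc _ ≤ (∏ p ∈ G.Astar, ((z p : ℝ)) ^ (z p * np p)) * 1 :=
          mul_le_mul_of_nonneg_left hexp1 hnn
      _ = _ := mul_one _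
  -- cast of piw
  have hpiwx : ((piw G H (fun p => H.iota (ζ p.1) (ζ p.2) *
      {L | L ∈ 𝓛 ∧ p ∈ L.Astar}.ncard) ξ : ℕ) : ℝ) =
      ∏ p ∈ G.Astar, ((x p : ℝ)) ^ (z p * np p) := by
    rw [piw]
    push_cast
    exact Finset.prod_congr rfl fun p _ => by rw [hncard p]
  have hpiwz : ((piw G H (fun p => H.iota (ζ p.1) (ζ p.2) *
      {L | L ∈ 𝓛 ∧ p ∈ L.Astar}.ncard) ζ : ℕ) : ℝ) =
      ∏ p ∈ G.Astar, ((z p : ℝ)) ^ (z p * np p) := by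
    rw [piw]
    push_cast
    exact Finset.prod_congr rfl fun p _ => by rw [hncard p]
  have hle : piw G H (fun p => H.iota (ζ p.1) (ζ p.2) *
      {L | L ∈ 𝓛 ∧ p ∈ L.Astar}.ncard) ξ ≤
      piw G H (fun p => H.iota (ζ p.1) (ζ p.2) *
      {L | L ∈ 𝓛 ∧ p ∈ L.Astar}.ncard) ζ := by
    rw [← Nat.cast_le (α := ℝ), hpiwx, hpiwz]
    calc ∏ p ∈ G.Astar, ((x p : ℝ)) ^ (z p * np p)
        ≤ ∏ p ∈ G.Astar, (((z p : ℝ)) ^ (z p * np p) *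
            Real.exp (((x p : ℝ) - z p) * np p)) :=
          Finset.prod_le_prod (fun p _ => by positivity) hfacle
      _ ≤ _ := hub
  refine ⟨hle, ?_, ?_⟩
  · -- equality implies iota agreement on positive-weight arcs
    intro heq p0 hp0 hpos
    by_contra hne
    have hzpos : 0 < z p0 * np p0 := by
      simp only [hncard p0] at hpos; exact hpos
    have hnp0 : np p0 ≠ 0 := by
      intro h0
      rw [h0, mul_zero] at hzpos
      exact lt_irrefl 0 hzpos
    have hstrict : ((x p0 : ℝ)) ^ (z p0 * np p0) <
        ((z p0 : ℝ)) ^ (z p0 * np p0) * Real.exp (((x p0 : ℝ) - z p0) * np p0) :=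
      pow_lt_exp_mul (x p0) (z p0) (np p0) (hz1 p0 hp0) hnp0 hne
    have hlt : ∏ p ∈ G.Astar, ((x p : ℝ)) ^ (z p * np p) <
        ∏ p ∈ G.Astar, ((z p : ℝ)) ^ (z p * np p) := by
      calc ∏ p ∈ G.Astar, ((x p : ℝ)) ^ (z p * np p)
          < ∏ p ∈ G.Astar, (((z p : ℝ)) ^ (z p * np p) *
              Real.exp (((x p : ℝ) - z p) * np p)) := by
            refine Finset.prod_lt_prod ?_ hfacle ⟨p0, hp0, hstrict⟩
            intro p hp
            have := hx1 p hp
            positivity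
        _ ≤ _ := hub
    rw [← hpiwx, ← hpiwz, heq] at hlt
    exact lt_irrefl _ hlt
  · -- iota agreement implies equality
    intro h
    rw [piw, piw]
    refine Finset.prod_congr rfl fun p hp => ?_
    by_cases h0 : 0 < H.iota (ζ p.1) (ζ p.2) * {L | L ∈ 𝓛 ∧ p ∈ L.Astar}.ncard
    · rw [h p hp h0]
    · have : H.iota (ζ p.1) (ζ p.2) * {L | L ∈ 𝓛 ∧ p ∈ L.Astar}.ncard = 0 := by omega
      rw [this, pow_zero, pow_zero]
end

section
/- A reflexive digraph R ∈ 𝔗_a belongs to 𝕽 if and only if Σ_{i=1}^{ℓ(P)} ι(P_{i-1},P_i)_R ≤ h_R + ℓ(P) for every path P = P_0,…,P_{ℓ(P)} in R. In particular, every poset of height at most 1 belongs to 𝕽. -/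
open Dgraph

/-
For a reflexive `R` with `R*` acyclic, `ι(v, v) = 1`, and along a path of maximal length `h_R`
the interval of two consecutive vertices consists of just these two vertices, so such a path `Q`
has `Σ ι = 2 h_R`. Homomorphisms `Q_× → R` are walks with `h_R + 1` vertices, and deleting
repeated consecutive vertices turns a walk into a path, every deleted loop contributing `1` to
`Σ ι` and to the length. Hence, under the path bound, every homomorphism `Q_× → R` has
`μ ≤ 2 h_R`, and the identity is a strict homomorphism in `𝓜^{𝓛(R)}(R, R)`. Conversely, a strict
`ξ` maps `Q` to a longest path, so `μ_ξ(Q_×) = 2 h_R`; padding a path `P` with `h_R - ℓ(P)` loops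
at `P_0` gives a homomorphism `Q_× → R` with `μ = h_R - ℓ(P) + Σ ι(P_{i-1}, P_i)`, which yields the
bound. In a poset of height at most `1`, the interval of an arc `vw` with `v ≠ w` is contained in
`{v, w}`.
-/

namespace List

variable {α : Type*} {R : α → α → Prop}

theorem isChain_iff_forall_mem_zip_tail {l : List α} :
    l.IsChain R ↔ ∀ q ∈ l.zip l.tail, R q.1 q.2 := by
  induction l with
  | nil => simp
  | cons a t ih =>
    cases t with
    | nil => simp
    | cons b t => simp_all [isChain_cons_cons]

theorem IsChain.pairwise_transGen {l : List α} (h : l.IsChain R) :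
    l.Pairwise (Relation.TransGen R) :=
  (h.imp fun _ _ => Relation.TransGen.single).pairwise

theorem Nodup.zip_tail {l : List α} (h : l.Nodup) : (l.zip l.tail).Nodup :=
  Nodup.of_map Prod.snd <| by
    rw [map_snd_zip (by simp)]
    exact h.sublist (tail_sublist l)

end List

open Relation

namespace Dgraph

variable {G H R : Dgraph}

def IsWalk (G : Dgraph) (p : List ℕ) : Prop :=
  (∀ v ∈ p, v ∈ G.V) ∧ p.IsChain fun v w => (v, w) ∈ G.A

def ProperArc (G : Dgraph) (v w : ℕ) : Prop := (v, w) ∈ G.A ∧ v ≠ w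

def iotaSum (G : Dgraph) (p : List ℕ) : ℕ :=
  ((p.zip p.tail).map fun q => G.iota q.1 q.2).sum

@[simp] lemma iotaSum_nil : G.iotaSum [] = 0 := rfl

@[simp] lemma iotaSum_singleton (a : ℕ) : G.iotaSum [a] = 0 := rfl

@[simp] lemma iotaSum_cons_cons (a b : ℕ) (t : List ℕ) :
    G.iotaSum (a :: b :: t) = G.iota a b + G.iotaSum (b :: t) := by
  simp [iotaSum]

lemma iotaSum_eq_sum_range : ∀ p : List ℕ,
    G.iotaSum p = ∑ i ∈ Finset.range (p.length - 1), G.iota (p.getD i 0) (p.getD (i + 1) 0)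
  | [] | [_] => by simp
  | a :: b :: t => by
    rw [iotaSum_cons_cons, iotaSum_eq_sum_range (b :: t)]
    simp [Finset.sum_range_succ' _ t.length, add_comm]

lemma IsPath.isWalk {p : List ℕ} (hp : G.IsPath p) : G.IsWalk p := hp.2.2

lemma IsWalk.tail {a : ℕ} {t : List ℕ} (h : G.IsWalk (a :: t)) : G.IsWalk t :=
  ⟨fun v hv => h.1 v (List.mem_cons_of_mem a hv), h.2.tail⟩

lemma IsPath.isChain_properArc {p : List ℕ} (hp : G.IsPath p) : p.IsChain G.ProperArc :=
  List.isChain_iff_getElem.mpr fun i hi =>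
    ⟨List.isChain_iff_getElem.mp hp.2.2.2 i hi,
      List.isChain_iff_getElem.mp hp.2.1.isChain i hi⟩

lemma mem_V_of_isChain_cons {a : ℕ} :
    ∀ {l : List ℕ}, (a :: l).IsChain (fun v w => (v, w) ∈ G.A) → ∀ x ∈ l, x ∈ G.V
  | [], _ => by simp
  | b :: t, h => by
    rw [List.isChain_cons_cons] at h
    rintro x (_ | ⟨_, hx⟩)
    · exact (G.A_sub _ h.1).2
    · exact mem_V_of_isChain_cons h.2 x hx

lemma memTa_iff : G.MemTa ↔ ∀ v, ¬ TransGen G.ProperArc v v := by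
  refine ⟨fun hTa v hv => hTa ?_, fun h ⟨p, hpV, hp, hlen, hclosed⟩ => ?_⟩
  · obtain ⟨b, hvb, hbv⟩ := TransGen.head'_iff.mp hv
    obtain ⟨l, hl, hlast⟩ := List.exists_isChain_cons_of_relationReflTransGen hbv
    have hchain : (v :: b :: l).IsChain G.ProperArc := hl.cons_cons hvb
    refine ⟨v :: b :: l, ?_, hchain, by simp, ?_⟩
    · rintro x (_ | ⟨_, hx⟩)
      · exact (G.A_sub _ hvb.1).1
      · exact mem_V_of_isChain_cons (hchain.imp fun _ _ h => h.1) x hx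
    · simp [List.getLast?_eq_some_getLast, hlast]
  · match p, hlen with
    | x :: y :: t, _ =>
      replace hp := List.isChain_cons_cons.mp hp
      have hyx : ReflTransGen G.ProperArc y x := by
        refine List.relationReflTransGen_of_exists_isChain_cons t hp.2 ?_
        simpa [List.getLast?_eq_some_getLast] using hclosed.symm
      exact h x (TransGen.head'_iff.mpr ⟨y, hp.1, hyx⟩)

lemma MemTa.nodup_of_isChain (hTa : G.MemTa) {p : List ℕ} (hp : p.IsChain G.ProperArc) :
    p.Nodup :=
  hp.pairwise_transGen.imp fun hvw => by rintro rfl; exact memTa_iff.mp hTa _ hvw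

lemma MemTa.isPath_of_isChain (hTa : G.MemTa) {p : List ℕ} (hne : p ≠ [])
    (hV : ∀ v ∈ p, v ∈ G.V) (hp : p.IsChain G.ProperArc) : G.IsPath p :=
  ⟨hne, hTa.nodup_of_isChain hp, hV, hp.imp fun _ _ h => h.1⟩

lemma bddAbove_pathLengths (G : Dgraph) :
    BddAbove {n | ∃ p, G.IsPath p ∧ p.length = n + 1} := by
  refine ⟨G.V.card, fun n ⟨p, hp, hlen⟩ => ?_⟩
  have hsub : p.toFinset ⊆ G.V := fun v hv => hp.2.2.1 v (List.mem_toFinset.mp hv)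
  have := Finset.card_le_card hsub
  rw [List.toFinset_card_of_nodup hp.2.1] at this
  omega

lemma IsPath.length_le_height {p : List ℕ} (hp : G.IsPath p) : p.length ≤ G.height + 1 := by
  have hpos : 0 < p.length := List.length_pos_iff.mpr hp.1
  have : p.length - 1 ≤ G.height := le_csSup G.bddAbove_pathLengths ⟨p, hp, by omega⟩
  omega

lemma isPath_singleton {v : ℕ} (hv : v ∈ G.V) : G.IsPath [v] :=
  ⟨by simp, by simp, by simpa using hv, List.isChain_singleton v⟩

lemma exists_isPath_length_eq_height (G : Dgraph) :
    ∃ p, G.IsPath p ∧ p.length = G.height + 1 := by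
  obtain ⟨v, hv⟩ := G.nonempty
  exact Nat.sSup_mem (s := {n | ∃ p, G.IsPath p ∧ p.length = n + 1})
    ⟨0, [v], isPath_singleton hv, rfl⟩ G.bddAbove_pathLengths

lemma iota_self (hTa : G.MemTa) {v : ℕ} (hv : (v, v) ∈ G.A) : G.iota v v = 1 := by
  suffices G.interval v v = {v} by rw [iota, this, Finset.card_singleton]
  ext z
  simp only [interval, Finset.mem_filter, Finset.mem_singleton]
  refine ⟨fun ⟨_, hvz, hzv⟩ => ?_, by rintro rfl; exact ⟨(G.A_sub _ hv).1, hv, hv⟩⟩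
  by_contra hne
  exact memTa_iff.mp hTa v (.tail (.single ⟨hvz, Ne.symm hne⟩) ⟨hzv, hne⟩)

lemma IsPath.insert {l₁ l₂ : List ℕ} {a b z : ℕ} (hP : G.IsPath (l₁ ++ a :: b :: l₂))
    (hz : z ∉ l₁ ++ a :: b :: l₂) (haz : (a, z) ∈ G.A) (hzb : (z, b) ∈ G.A) :
    G.IsPath (l₁ ++ a :: z :: b :: l₂) := by
  obtain ⟨-, hnd, hV, hchain⟩ := hP
  replace hchain := List.isChain_append_cons_cons.mp hchain
  refine ⟨by simp, ?_, ?_, ?_⟩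
  · rw [show l₁ ++ a :: z :: b :: l₂ = (l₁ ++ [a]) ++ z :: b :: l₂ by simp, List.nodup_middle,
      List.nodup_cons]
    exact ⟨by simpa using hz, by simpa using hnd⟩
  · intro v hv
    simp only [List.mem_append, List.mem_cons] at hv
    rcases hv with hv | rfl | rfl | rfl | hv
    · exact hV v (by simp [hv])
    · exact hV v (by simp)
    · exact (G.A_sub _ haz).2
    · exact hV v (by simp)
    · exact hV v (by simp [hv])
  · exact List.isChain_append_cons_cons.mpr
      ⟨hchain.1, haz, List.isChain_cons_cons.mpr ⟨hzb, hchain.2.2⟩⟩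

/-- On a path of maximal length, consecutive vertices `a, b` have `[a, b] = {a, b}`: a further
vertex of `[a, b]` either closes a cycle with the path or can be inserted between `a` and `b`. -/
lemma iota_eq_two_of_length_eq_height (hTa : G.MemTa) (hRefl : G.IsRefl)
    {l₁ l₂ : List ℕ} {a b : ℕ} (hP : G.IsPath (l₁ ++ a :: b :: l₂))
    (hlen : (l₁ ++ a :: b :: l₂).length = G.height + 1) : G.iota a b = 2 := by
  have hchain := hP.isChain_properArc
  have hab : G.ProperArc a b := (List.isChain_append_cons_cons.mp hchain).2.1
  have hpw := hchain.pairwise_transGen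
  have haV := (G.A_sub _ hab.1).1
  have hbV := (G.A_sub _ hab.1).2
  suffices G.interval a b = {a, b} by
    rw [iota, this, Finset.card_pair hab.2]
  ext z
  simp only [interval, Finset.mem_filter, Finset.mem_insert, Finset.mem_singleton]
  refine ⟨fun ⟨_, haz, hzb⟩ => ?_, ?_⟩
  · by_contra! hne
    have hcycle := memTa_iff.mp hTa
    rw [List.pairwise_append, List.pairwise_cons, List.pairwise_cons] at hpw
    by_cases hz : z ∈ l₁ ++ a :: b :: l₂
    · simp only [List.mem_append, List.mem_cons] at hz
      rcases hz with hz | rfl | rfl | hz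
      · exact hcycle a (.head ⟨haz, hne.1.symm⟩ (hpw.2.2 z hz a (by simp)))
      · exact hne.1 rfl
      · exact hne.2 rfl
      · exact hcycle b (.tail (hpw.2.1.2.1 z hz) ⟨hzb, hne.2⟩)
    · have := (hP.insert hz haz hzb).length_le_height
      simp only [List.length_append, List.length_cons] at this hlen
      omega
  · rintro (rfl | rfl)
    · exact ⟨haV, hRefl _ haV, hab.1⟩
    · exact ⟨hbV, hab.1, hRefl _ hbV⟩

lemma iotaSum_eq_two_mul_height (hTa : G.MemTa) (hRefl : G.IsRefl) {p : List ℕ}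
    (hp : G.IsPath p) (hlen : p.length = G.height + 1) : G.iotaSum p = 2 * G.height := by
  have hchain : p.IsChain fun a b => G.iota a b = 2 :=
    List.isChain_iff_forall_rel_of_append_cons_cons.mpr fun a b l₁ l₂ hsplit =>
      iota_eq_two_of_length_eq_height hTa hRefl (hsplit ▸ hp) (hsplit ▸ hlen)
  rw [iotaSum,
    List.map_congr_left (g := fun _ => 2) (List.isChain_iff_forall_mem_zip_tail.mp hchain)]
  simp [hlen, mul_comm]

lemma exists_isPath_iotaSum_eq (hTa : G.MemTa) :
    ∀ {a : ℕ} {t : List ℕ}, G.IsWalk (a :: t) → ∃ Q, G.IsPath (a :: Q) ∧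
      Q.length ≤ t.length ∧ G.iotaSum (a :: t) = G.iotaSum (a :: Q) + (t.length - Q.length)
  | a, [], hW => ⟨[], isPath_singleton (hW.1 a (by simp)), le_rfl, rfl⟩
  | a, b :: t, hW => by
    obtain ⟨Q, hQ, hle, hsum⟩ := exists_isPath_iotaSum_eq hTa hW.tail
    have hab : (a, b) ∈ G.A := (List.isChain_cons_cons.mp hW.2).1
    by_cases heq : a = b
    · subst heq
      refine ⟨Q, hQ, by simp only [List.length_cons]; omega, ?_⟩
      rw [iotaSum_cons_cons, iota_self hTa hab, hsum, List.length_cons]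
      omega
    · have hpath : G.IsPath (a :: b :: Q) :=
        hTa.isPath_of_isChain (by simp)
          (by rintro v (_ | ⟨_, hv⟩); exacts [hW.1 a (by simp), hQ.2.2.1 v hv])
          (hQ.isChain_properArc.cons_cons ⟨hab, heq⟩)
      refine ⟨b :: Q, hpath, by simpa using hle, ?_⟩
      rw [iotaSum_cons_cons, iotaSum_cons_cons, hsum]
      simp only [List.length_cons]
      omega

lemma iotaSum_le_of_isWalk (hTa : G.MemTa)
    (hbound : ∀ P, G.IsPath P → G.iotaSum P ≤ G.height + (P.length - 1))
    {W : List ℕ} (hW : G.IsWalk W) : G.iotaSum W ≤ G.height + (W.length - 1) := by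
  cases W with
  | nil => simp
  | cons a t =>
    obtain ⟨Q, hQ, hle, hsum⟩ := exists_isPath_iotaSum_eq hTa hW
    have := hbound _ hQ
    simp only [List.length_cons] at this ⊢
    omega

lemma mu_pathGraph {P : List ℕ} (hP : P ≠ []) (hnd : P.Nodup) (f : ℕ → ℕ) :
    mu (pathGraph P hP) H f = H.iotaSum (P.map f) := by
  have hAstar : (pathGraph P hP).Astar = (P.zip P.tail).toFinset :=
    Finset.filter_true_of_mem fun q hq =>
      List.isChain_iff_forall_mem_zip_tail.mp hnd.isChain q (List.mem_toFinset.mp hq)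
  rw [mu, hAstar, List.sum_toFinset _ hnd.zip_tail, iotaSum, ← List.map_tail, List.zip_map,
    List.map_map]
  rfl

lemma mem_hom_pathGraph_iff {P : List ℕ} (hP : P ≠ []) {g : ℕ → ℕ} :
    g ∈ Hom (pathGraph P hP) H ↔ H.IsWalk (P.map g) ∧ ∀ v ∉ P, g v = 0 := by
  simp only [IsWalk, List.isChain_map]
  simp [Hom, pathGraph, List.isChain_iff_forall_mem_zip_tail, and_assoc]

lemma exists_hom_pathGraph_map_eq {P : List ℕ} (hP : P ≠ []) (hnd : P.Nodup) {T : List ℕ}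
    (hT : H.IsWalk T) (hlen : T.length = P.length) :
    ∃ g ∈ Hom (pathGraph P hP) H, P.map g = T := by
  set g : ℕ → ℕ := fun x => if x ∈ P then T.getD (P.idxOf x) 0 else 0
  have hmap : P.map g = T :=
    List.ext_getElem (by simp [hlen]) fun i _ hi => by
      simp [g, hnd.idxOf_getElem, List.getElem?_eq_getElem hi]
  exact ⟨g, (mem_hom_pathGraph_iff hP).mpr ⟨hmap ▸ hT, fun v hv => if_neg hv⟩, hmap⟩

lemma map_restrict_of_forall_mem {X : Finset ℕ} {P : List ℕ} (hP : ∀ v ∈ P, v ∈ X)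
    (f : ℕ → ℕ) : P.map (restrict X f) = P.map f :=
  List.map_congr_left fun v hv => if_pos (hP v hv)

lemma map_restrict_pathGraph {P : List ℕ} (hP : P ≠ []) (f : ℕ → ℕ) :
    P.map (restrict (pathGraph P hP).V f) = P.map f :=
  map_restrict_of_forall_mem (fun _ => List.mem_toFinset.mpr) f

lemma restrict_id_mem_sHom (G : Dgraph) : restrict G.V id ∈ SHom G G := by
  have hid : ∀ p ∈ G.A, restrict G.V id p.1 = p.1 ∧ restrict G.V id p.2 = p.2 := fun p hp =>
    ⟨if_pos (G.A_sub p hp).1, if_pos (G.A_sub p hp).2⟩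
  refine ⟨⟨fun v hv => by simp [restrict, hv], fun p hp => ?_, fun v hv => if_neg hv⟩,
    fun p hp => ?_⟩
  · rwa [(hid p hp).1, (hid p hp).2]
  · obtain ⟨hpA, hne⟩ := Finset.mem_filter.mp hp
    rwa [(hid p hpA).1, (hid p hpA).2]

lemma isPath_map_of_mem_sHom (hTa : H.MemTa) {ξ : ℕ → ℕ} (hξ : ξ ∈ SHom G H) {P : List ℕ}
    (hP : G.IsPath P) : H.IsPath (P.map ξ) := by
  refine hTa.isPath_of_isChain (by simpa using hP.1) ?_ ?_
  · simpa using fun v hv => hξ.1.1 v (hP.2.2.1 v hv)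
  · exact List.isChain_map_of_isChain ξ (fun v w hvw =>
      ⟨hξ.1.2.1 _ hvw.1, hξ.2 (v, w) (Finset.mem_filter.mpr hvw)⟩) hP.isChain_properArc

lemma IsWalk.replicate_append {v : ℕ} {t : List ℕ} (hW : G.IsWalk (v :: t))
    (hv : (v, v) ∈ G.A) (k : ℕ) : G.IsWalk (List.replicate k v ++ v :: t) := by
  refine ⟨fun x hx => ?_, List.isChain_append.mpr
    ⟨List.isChain_replicate_of_rel k hv, hW.2, fun x hx y hy => ?_⟩⟩
  · simp only [List.mem_append, List.mem_replicate] at hx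
    rcases hx with ⟨-, rfl⟩ | hx
    exacts [hW.1 x (by simp), hW.1 x hx]
  · simp only [List.getLast?_replicate, List.head?_cons, Option.mem_def] at hx hy
    split_ifs at hx
    cases hx; cases hy; exact hv

lemma iotaSum_replicate_append (v : ℕ) (t : List ℕ) (k : ℕ) :
    G.iotaSum (List.replicate k v ++ v :: t) = k * G.iota v v + G.iotaSum (v :: t) := by
  induction k with
  | zero => simp
  | succ k ih =>
    rcases k with _ | k
    · simp
    · simp only [List.replicate_succ, List.cons_append, iotaSum_cons_cons] at ih ⊢
      rw [ih]
      ring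

lemma memR_of_iotaSum_le (hRefl : R.IsRefl) (hTa : R.MemTa)
    (hbound : ∀ P, R.IsPath P → R.iotaSum P ≤ R.height + (P.length - 1)) : R.MemR := by
  have hid := restrict_id_mem_sHom R
  refine ⟨hTa, hRefl, restrict R.V id, ⟨hid.1, ?_⟩, hid⟩
  rintro _ ⟨P, hPne, hP, hPlen, rfl⟩
  have hmap : P.map (restrict (pathGraph P hPne).V (restrict R.V id)) = P := by
    rw [map_restrict_pathGraph, map_restrict_of_forall_mem hP.2.2.1, List.map_id]
  refine ⟨(mem_hom_pathGraph_iff hPne).mpr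
    ⟨by rw [hmap]; exact hP.isWalk, fun v hv => if_neg ?_⟩, ?_⟩
  · simpa [pathGraph] using hv
  · intro g hg
    rw [mu_pathGraph hPne hP.2.1, mu_pathGraph hPne hP.2.1, hmap,
      iotaSum_eq_two_mul_height hTa hRefl hP hPlen]
    have := iotaSum_le_of_isWalk hTa hbound ((mem_hom_pathGraph_iff hPne).mp hg).1
    simp only [List.length_map, hPlen] at this
    omega

lemma iotaSum_le_of_memR (hR : R.MemR) {p : List ℕ} (hp : R.IsPath p) :
    R.iotaSum p ≤ R.height + (p.length - 1) := by
  obtain ⟨hTa, hRefl, ξ, ⟨-, hML⟩, hξ⟩ := hR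
  obtain ⟨Q, hQ, hQlen⟩ := R.exists_isPath_length_eq_height
  have hmax : ∀ g ∈ Hom (pathGraph Q hQ.1) R, R.iotaSum (Q.map g) ≤ 2 * R.height := by
    intro g hg
    have := (hML _ ⟨Q, hQ.1, hQ, hQlen, rfl⟩).2 g hg
    rwa [mu_pathGraph hQ.1 hQ.2.1, mu_pathGraph hQ.1 hQ.2.1, map_restrict_pathGraph,
      iotaSum_eq_two_mul_height hTa hRefl (isPath_map_of_mem_sHom hTa hξ hQ)
        (by simp [hQlen])] at this
  obtain ⟨v, t, rfl⟩ := List.exists_cons_of_ne_nil hp.1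
  have hv : (v, v) ∈ R.A := hRefl v (hp.2.2.1 v (by simp))
  have hle := hp.length_le_height
  set k := R.height - t.length
  have hlen : (List.replicate k v ++ v :: t).length = Q.length := by
    simp only [List.length_append, List.length_replicate, List.length_cons] at hle ⊢
    omega
  obtain ⟨g, hg, hgT⟩ :=
    exists_hom_pathGraph_map_eq hQ.1 hQ.2.1 (hp.isWalk.replicate_append hv k) hlen
  have := hmax g hg
  rw [hgT, iotaSum_replicate_append, iota_self hTa hv] at this
  simp only [List.length_cons] at hle ⊢
  omega

lemma memR_iff_forall_isPath_iotaSum_le (hRefl : R.IsRefl) (hTa : R.MemTa) :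
    R.MemR ↔ ∀ P, R.IsPath P → R.iotaSum P ≤ R.height + (P.length - 1) :=
  ⟨fun hR _ hP => iotaSum_le_of_memR hR hP, memR_of_iotaSum_le hRefl hTa⟩

lemma IsPoset.properArc_of_transGen (hG : G.IsPoset) {v w : ℕ}
    (h : TransGen G.ProperArc v w) : G.ProperArc v w := by
  induction h with
  | single h => exact h
  | tail _ hyz ih =>
    refine ⟨hG.2.2 _ _ _ ih.1 hyz.1, ?_⟩
    rintro rfl
    exact ih.2 (hG.2.1 _ _ ih.1 hyz.1)

lemma IsPoset.memTa (hG : G.IsPoset) : G.MemTa :=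
  memTa_iff.mpr fun _ h => (hG.properArc_of_transGen h).2 rfl

lemma iota_le_two_of_height_le_one (hG : G.height ≤ 1) {v w : ℕ} (hvw : v ≠ w) :
    G.iota v w ≤ 2 := by
  have hsub : G.interval v w ⊆ {v, w} := by
    intro z hz
    obtain ⟨hzV, hvz, hzw⟩ := Finset.mem_filter.mp hz
    by_contra hne
    simp only [Finset.mem_insert, Finset.mem_singleton, not_or] at hne
    have hpath : G.IsPath [v, z, w] := by
      refine ⟨by simp, by simp [hvw, hne.2, Ne.symm hne.1], ?_,
        List.isChain_cons_cons.mpr ⟨hvz, List.isChain_pair.mpr hzw⟩⟩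
      simp [hzV, (G.A_sub _ hvz).1, (G.A_sub _ hzw).2]
    have := hpath.length_le_height
    simp only [List.length_cons, List.length_nil] at this
    omega
  exact (Finset.card_le_card hsub).trans Finset.card_le_two

lemma iotaSum_le_of_height_le_one (hG : G.height ≤ 1) {P : List ℕ} (hP : G.IsPath P) :
    G.iotaSum P ≤ G.height + (P.length - 1) := by
  have hle := hP.length_le_height
  match P, hP with
  | [_], _ => simp
  | [v, w], hP =>
    have hvw : v ≠ w := by simpa using hP.2.1
    have := iota_le_two_of_height_le_one hG hvw
    simp only [iotaSum_cons_cons, iotaSum_singleton, List.length_cons, List.length_nil] at hle ⊢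
    omega
  | _ :: _ :: _ :: _, _ => simp only [List.length_cons] at hle; omega

end Dgraph

theorem stmt_8 :
    (∀ R : Dgraph, R.IsRefl → R.MemTa →
      (MemR R ↔ ∀ P : List ℕ, R.IsPath P →
        ∑ i ∈ Finset.range (P.length - 1),
          R.iota (P.getD i 0) (P.getD (i + 1) 0) ≤ R.height + (P.length - 1))) ∧
    (∀ R : Dgraph, R.IsPoset → R.height ≤ 1 → MemR R) := by
  refine ⟨fun R hRefl hTa => ?_, fun R hR hh => ?_⟩
  · simp only [← iotaSum_eq_sum_range]
    exact memR_iff_forall_isPath_iotaSum_le hRefl hTa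
  · exact (memR_iff_forall_isPath_iotaSum_le hR.1 hR.memTa).mpr fun _ =>
      iotaSum_le_of_height_le_one hh
end

section
/- Let R be a reflexive digraph in 𝔗_a with R_× = R* (no proper arc vw of R admits a path of length ≥ 2 in R* from v to w). Then R ∈ 𝕽, and for every G ∈ 𝔗_a with 𝓢(G,R) ≠ ∅: (i) for every nonempty set 𝓛 of subgraphs of G, 𝓜^𝓛(G,R) = {ξ ∈ 𝓗(G,R) : ξ restricted to V(L) lies in 𝓢(L,R) for all L ∈ 𝓛}; (ii) 𝓜(G,R) = {ξ ∈ 𝓗(G,R) : ι_ξ(v,w) = 2 for all vw ∈ A(G*)} = 𝓢(G,R). -/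
open Dgraph

/-- `R_× = R*`: no proper arc `vw` of `R` admits a path of length ≥ 2 in `R*`
from `v` to `w`. -/
def NoTwoStep (R : Dgraph) : Prop :=
  ∀ p ∈ R.Astar, ¬ ∃ q : List ℕ, R.IsPathStar q ∧ 3 ≤ q.length ∧
    q.head? = some p.1 ∧ q.getLast? = some p.2


/-!
Because `R_× = R*`, every interval of an arc of `R` is as small as reflexivity allows:
`[u,u]_R = {u}` (a second vertex would close a 2-cycle in `R*`) and `[v,w]_R = {v,w}` for a
proper arc (a third vertex would give a detour `v,z,w`). Hence for any homomorphism `ξ : G → R`,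
`μ_ξ(G) ≤ 2·#A(G*)`, with equality exactly when `ξ` sends every proper arc to a proper arc, i.e.
when `ξ` is strict. So once `𝓢(G,R) ≠ ∅` the maximal homomorphisms are the strict ones. Strictness
survives restriction to subgraphs, which gives (i), and the identity of `R`, restricted to the
longest paths of `R`, witnesses `R ∈ 𝕽`.
-/

theorem List.IsChain.rel_of_mem_zip_tail {α : Type*} {r : α → α → Prop} :
    ∀ {l : List α}, l.IsChain r → ∀ p ∈ l.zip l.tail, r p.1 p.2
  | [], _, _, hp => by simp at hp
  | [_], _, _, hp => by simp at hp
  | a :: b :: t, h, p, hp => by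
    rw [List.isChain_cons_cons] at h
    rw [List.tail_cons, List.zip_cons_cons, List.mem_cons] at hp
    rcases hp with rfl | hp
    · exact h.1
    · exact h.2.rel_of_mem_zip_tail p hp

namespace Dgraph

open Finset

variable {R G L : Dgraph}

theorem interval_self (hRr : R.IsRefl) (hRt : R.MemTa) {u : ℕ} (hu : u ∈ R.V) :
    R.interval u u = {u} := by
  ext z
  simp only [interval, mem_filter, mem_singleton]
  refine ⟨fun ⟨hz, huz, hzu⟩ => ?_, by rintro rfl; exact ⟨hu, hRr z hu, hRr z hu⟩⟩
  by_contra hne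
  refine hRt ⟨[u, z, u], ?_, ?_, by simp, by simp⟩
  · simp [hu, hz]
  · exact List.isChain_cons_cons.mpr ⟨⟨huz, Ne.symm hne⟩, List.isChain_pair.mpr ⟨hzu, hne⟩⟩

theorem interval_of_mem_Astar (hRr : R.IsRefl) (hRed : NoTwoStep R) {v w : ℕ}
    (hvw : (v, w) ∈ R.A) (hne : v ≠ w) : R.interval v w = {v, w} := by
  obtain ⟨hv, hw⟩ := R.A_sub _ hvw
  ext z
  simp only [interval, mem_filter, mem_insert, mem_singleton]
  refine ⟨fun ⟨hz, hvz, hzw⟩ => ?_, ?_⟩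
  · by_contra! ⟨hzv, hzw'⟩
    refine hRed (v, w) (mem_filter.mpr ⟨hvw, hne⟩)
      ⟨[v, z, w], ⟨by simp, ?_, by simp [hv, hz, hw], ?_⟩, by simp, rfl, rfl⟩
    · simp [hne, Ne.symm hzv, hzw']
    · exact List.isChain_cons_cons.mpr ⟨⟨hvz, Ne.symm hzv⟩, List.isChain_pair.mpr ⟨hzw, hzw'⟩⟩
  · rintro (rfl | rfl)
    · exact ⟨hv, hRr _ hv, hvw⟩
    · exact ⟨hw, hvw, hRr _ hw⟩

theorem iota_of_mem_A (hRr : R.IsRefl) (hRt : R.MemTa) (hRed : NoTwoStep R) {v w : ℕ}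
    (hvw : (v, w) ∈ R.A) : R.iota v w = if v = w then 1 else 2 := by
  split_ifs with h
  · subst h
    rw [iota, interval_self hRr hRt (R.A_sub _ hvw).1, card_singleton]
  · rw [iota, interval_of_mem_Astar hRr hRed hvw h, card_pair h]

theorem iota_le_two (hRr : R.IsRefl) (hRt : R.MemTa) (hRed : NoTwoStep R) {v w : ℕ}
    (hvw : (v, w) ∈ R.A) : R.iota v w ≤ 2 := by
  rw [iota_of_mem_A hRr hRt hRed hvw]
  split_ifs <;> omega

theorem iota_eq_two_iff (hRr : R.IsRefl) (hRt : R.MemTa) (hRed : NoTwoStep R) {v w : ℕ}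
    (hvw : (v, w) ∈ R.A) : R.iota v w = 2 ↔ v ≠ w := by
  rw [iota_of_mem_A hRr hRt hRed hvw]
  split_ifs with h <;> simp [h]

theorem map_mem_A_of_mem_Hom {ξ : ℕ → ℕ} (hξ : ξ ∈ Hom G R) {p : ℕ × ℕ} (hp : p ∈ G.Astar) :
    (ξ p.1, ξ p.2) ∈ R.A :=
  hξ.2.1 p (mem_filter.mp hp).1

theorem SHom_eq_setOf_iota_eq_two (hRr : R.IsRefl) (hRt : R.MemTa) (hRed : NoTwoStep R) :
    SHom G R = {ξ ∈ Hom G R | ∀ p ∈ G.Astar, R.iota (ξ p.1) (ξ p.2) = 2} := by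
  ext ξ
  exact and_congr_right fun hξ => forall₂_congr fun p hp =>
    (iota_eq_two_iff hRr hRt hRed (map_mem_A_of_mem_Hom hξ hp)).symm

theorem mu_eq_iff (hRr : R.IsRefl) (hRt : R.MemTa) (hRed : NoTwoStep R) {ξ : ℕ → ℕ}
    (hξ : ξ ∈ Hom G R) :
    mu G R ξ = 2 * #G.Astar ↔ ∀ p ∈ G.Astar, R.iota (ξ p.1) (ξ p.2) = 2 := by
  rw [mu, mul_comm, ← smul_eq_mul, ← sum_const]
  exact sum_eq_sum_iff_of_le fun p hp => iota_le_two hRr hRt hRed (map_mem_A_of_mem_Hom hξ hp)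

theorem mu_le (hRr : R.IsRefl) (hRt : R.MemTa) (hRed : NoTwoStep R) {ξ : ℕ → ℕ}
    (hξ : ξ ∈ Hom G R) : mu G R ξ ≤ 2 * #G.Astar := by
  rw [mu, mul_comm, ← smul_eq_mul, ← sum_const]
  exact sum_le_sum fun p hp => iota_le_two hRr hRt hRed (map_mem_A_of_mem_Hom hξ hp)

theorem mu_eq_of_mem_SHom (hRr : R.IsRefl) (hRt : R.MemTa) (hRed : NoTwoStep R) {ξ : ℕ → ℕ}
    (hξ : ξ ∈ SHom G R) : mu G R ξ = 2 * #G.Astar := by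
  rw [SHom_eq_setOf_iota_eq_two hRr hRt hRed] at hξ
  exact (mu_eq_iff hRr hRt hRed hξ.1).mpr hξ.2

theorem MSet_eq_SHom (hRr : R.IsRefl) (hRt : R.MemTa) (hRed : NoTwoStep R)
    (hS : (SHom G R).Nonempty) : MSet G R = SHom G R := by
  obtain ⟨σ, hσ⟩ := hS
  ext ξ
  refine ⟨fun ⟨hξ, hmax⟩ => ?_, fun hξ => ⟨hξ.1, fun η hη => ?_⟩⟩
  · have hmu : mu G R ξ = 2 * #G.Astar :=
      (mu_le hRr hRt hRed hξ).antisymm (mu_eq_of_mem_SHom hRr hRt hRed hσ ▸ hmax σ hσ.1)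
    rw [SHom_eq_setOf_iota_eq_two hRr hRt hRed]
    exact ⟨hξ, (mu_eq_iff hRr hRt hRed hξ).mp hmu⟩
  · exact mu_eq_of_mem_SHom hRr hRt hRed hξ ▸ mu_le hRr hRt hRed hη

theorem restrict_mem_SHom (hL : Subgraph L G) {ξ : ℕ → ℕ} (hξ : ξ ∈ SHom G R) :
    restrict L.V ξ ∈ SHom L R := by
  have hres : ∀ p ∈ L.A, restrict L.V ξ p.1 = ξ p.1 ∧ restrict L.V ξ p.2 = ξ p.2 :=
    fun p hp => ⟨if_pos (L.A_sub p hp).1, if_pos (L.A_sub p hp).2⟩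
  refine ⟨⟨fun v hv => ?_, fun p hp => ?_, fun v hv => if_neg hv⟩, fun p hp => ?_⟩
  · rw [restrict, if_pos hv]
    exact hξ.1.1 v (hL.1 hv)
  · rw [(hres p hp).1, (hres p hp).2]
    exact hξ.1.2.1 p (hL.2 hp)
  · obtain ⟨hpA, hpne⟩ := mem_filter.mp hp
    rw [(hres p hpA).1, (hres p hpA).2]
    exact hξ.2 p (mem_filter.mpr ⟨hL.2 hpA, hpne⟩)

theorem restrict_id_mem_SHom : restrict R.V id ∈ SHom R R := by
  have hres : ∀ p ∈ R.A, restrict R.V id p.1 = p.1 ∧ restrict R.V id p.2 = p.2 :=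
    fun p hp => ⟨if_pos (R.A_sub p hp).1, if_pos (R.A_sub p hp).2⟩
  refine ⟨⟨fun v hv => ?_, fun p hp => ?_, fun v hv => if_neg hv⟩, fun p hp => ?_⟩
  · rwa [restrict, if_pos hv]
  · rwa [(hres p hp).1, (hres p hp).2]
  · obtain ⟨hpA, hpne⟩ := mem_filter.mp hp
    rwa [(hres p hpA).1, (hres p hpA).2]

theorem pathGraph_subgraph {P : List ℕ} (h : P ≠ []) (hP : G.IsPath P) :
    Subgraph (pathGraph P h) G :=
  ⟨fun v hv => hP.2.2.1 v (List.mem_toFinset.mp hv),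
    fun p hp => hP.2.2.2.rel_of_mem_zip_tail p (List.mem_toFinset.mp hp)⟩

end Dgraph

theorem stmt_11 (R : Dgraph) (hRr : R.IsRefl) (hRt : R.MemTa)
    (hRed : NoTwoStep R) :
    MemR R ∧
    ∀ G : Dgraph, G.MemTa → (SHom G R).Nonempty →
      ((∀ 𝓛 : Set Dgraph, 𝓛.Nonempty → (∀ L ∈ 𝓛, Subgraph L G) →
        MLSet G R 𝓛 = {ξ ∈ Hom G R | ∀ L ∈ 𝓛, restrict L.V ξ ∈ SHom L R}) ∧
      MSet G R = {ξ ∈ Hom G R | ∀ p ∈ G.Astar, R.iota (ξ p.1) (ξ p.2) = 2} ∧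
      MSet G R = SHom G R) := by
  have hM {G : Dgraph} : (SHom G R).Nonempty → MSet G R = SHom G R :=
    MSet_eq_SHom hRr hRt hRed
  have hid := restrict_id_mem_SHom (R := R)
  refine ⟨⟨hRt, hRr, _, ⟨hid.1, ?_⟩, hid⟩,
    fun G _ ⟨σ, hσ⟩ => ⟨fun 𝓛 _ h𝓛 => ?_, ?_, hM ⟨σ, hσ⟩⟩⟩
  · rintro _ ⟨P, hP0, hP, -, rfl⟩
    have hPid := restrict_mem_SHom (pathGraph_subgraph hP0 hP) hid
    exact (hM ⟨_, hPid⟩).symm ▸ hPid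
  · ext ξ
    exact and_congr_right fun _ => forall₂_congr fun L hL => by
      rw [hM ⟨_, restrict_mem_SHom (h𝓛 L hL) hσ⟩]
  · rw [hM ⟨σ, hσ⟩, SHom_eq_setOf_iota_eq_two hRr hRt hRed]
end
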